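/- Universal approximation (Stone–Weierstrass consequence): if G : ℝ → ℝ is continuous and non-constant, then the algebra of functions of the form f(x) = Σ_{j=1}^q β_j Π_{k=1}^{l_j} G(w_{jk}·x + b_{jk}) is uniformly dense in C(K, ℝ) for every compact K ⊆ ℝ^r. -/

import Mathlib

/-!
`Σ∏ʳ(G)` is closed under sums and products and contains the constants, so it is a subalgebra of
`ℝʳ → ℝ`; when `G` is continuous its members are continuous. Since `G` takes two distinct values
`G a ≠ G b`, for `x ≠ y` an affine map sending `x ↦ a`, `y ↦ b` gives a member of `Σ∏ʳ(G)`
separating `x` from `y`. Stone–Weierstrass then approximates any continuous function uniformly on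
compact sets, after extending `f` from `K` to `ℝʳ` by Tietze.
-/

/-- The class `Σ∏ʳ(G)` of network output functions: finite linear combinations of
finite products of `G` composed with affine maps `ℝʳ → ℝ`. -/
def SigmaPi (r : ℕ) (G : ℝ → ℝ) : Set ((Fin r → ℝ) → ℝ) :=
  {f | ∃ (q : ℕ) (β : Fin q → ℝ) (l : Fin q → ℕ)
        (w : (j : Fin q) → Fin (l j) → (Fin r → ℝ)) (b : (j : Fin q) → Fin (l j) → ℝ),
      f = fun x => ∑ j : Fin q, β j * ∏ k : Fin (l j), G (∑ i : Fin r, w j k i * x i + b j k)}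

namespace SigmaPi

variable {r : ℕ} {G : ℝ → ℝ}

theorem mem_of_fintype {ι : Type*} [Fintype ι] (β : ι → ℝ) (l : ι → ℕ)
    (w : (j : ι) → Fin (l j) → (Fin r → ℝ)) (b : (j : ι) → Fin (l j) → ℝ) :
    (fun x => ∑ j : ι, β j * ∏ k : Fin (l j), G (∑ i : Fin r, w j k i * x i + b j k))
      ∈ SigmaPi r G := by
  let e := Fintype.equivFin ι
  refine ⟨Fintype.card ι, β ∘ e.symm, l ∘ e.symm, fun j => w (e.symm j), fun j => b (e.symm j), ?_⟩
  funext x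
  exact (Fintype.sum_equiv e.symm _ _ fun j => rfl).symm

theorem const_mem (c : ℝ) : (fun _ => c) ∈ SigmaPi r G := by
  simpa using mem_of_fintype (G := G) (ι := Unit) (fun _ => c) (fun _ => 0)
    (fun _ => Fin.elim0) (fun _ => Fin.elim0)

theorem comp_affine_mem (w : Fin r → ℝ) (c : ℝ) :
    (fun x => G (∑ i : Fin r, w i * x i + c)) ∈ SigmaPi r G := by
  simpa using mem_of_fintype (G := G) (ι := Unit) (fun _ => 1) (fun _ => 1)
    (fun _ _ => w) (fun _ _ => c)

theorem add_mem {f g : (Fin r → ℝ) → ℝ} (hf : f ∈ SigmaPi r G) (hg : g ∈ SigmaPi r G) :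
    f + g ∈ SigmaPi r G := by
  obtain ⟨q₁, β₁, l₁, w₁, b₁, rfl⟩ := hf
  obtain ⟨q₂, β₂, l₂, w₂, b₂, rfl⟩ := hg
  convert mem_of_fintype (G := G) (Sum.elim β₁ β₂) (Sum.elim l₁ l₂)
    (fun | .inl j => w₁ j | .inr j => w₂ j) (fun | .inl j => b₁ j | .inr j => b₂ j) using 1
  funext x
  rw [Pi.add_apply, Fintype.sum_sum_type]
  rfl

theorem mul_mem {f g : (Fin r → ℝ) → ℝ} (hf : f ∈ SigmaPi r G) (hg : g ∈ SigmaPi r G) :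
    f * g ∈ SigmaPi r G := by
  obtain ⟨q₁, β₁, l₁, w₁, b₁, rfl⟩ := hf
  obtain ⟨q₂, β₂, l₂, w₂, b₂, rfl⟩ := hg
  convert mem_of_fintype (G := G) (fun p : Fin q₁ × Fin q₂ => β₁ p.1 * β₂ p.2)
    (fun p => l₁ p.1 + l₂ p.2) (fun p => Fin.append (w₁ p.1) (w₂ p.2))
    (fun p => Fin.append (b₁ p.1) (b₂ p.2)) using 1
  funext x
  simp only [Pi.mul_apply, Finset.sum_mul_sum, Fintype.sum_prod_type, Fin.prod_univ_add,
    Fin.append_left, Fin.append_right]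
  exact Finset.sum_congr rfl fun j _ => Finset.sum_congr rfl fun k _ => by ring

end SigmaPi

def sigmaPiSubalgebra (r : ℕ) (G : ℝ → ℝ) : Subalgebra ℝ ((Fin r → ℝ) → ℝ) where
  carrier := SigmaPi r G
  mul_mem' := SigmaPi.mul_mem
  add_mem' := SigmaPi.add_mem
  algebraMap_mem' := SigmaPi.const_mem

theorem exists_affine_eq_of_ne {ι : Type*} [Fintype ι] [DecidableEq ι] {x y : ι → ℝ} (hxy : x ≠ y)
    (a b : ℝ) : ∃ (w : ι → ℝ) (c : ℝ), ∑ i, w i * x i + c = a ∧ ∑ i, w i * y i + c = b := by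
  obtain ⟨i, hi⟩ := Function.ne_iff.mp hxy
  set t := (a - b) / (x i - y i)
  have ht : t * (x i - y i) = a - b := div_mul_cancel₀ _ (sub_ne_zero.mpr hi)
  refine ⟨Pi.single i t, a - t * x i, ?_, ?_⟩ <;>
    simp only [Pi.single_apply, ite_mul, zero_mul, Finset.sum_ite_eq', Finset.mem_univ, if_true]
  · ring
  · linear_combination -ht

theorem separatesPoints_comap_sigmaPiSubalgebra {r : ℕ} {G : ℝ → ℝ} (hG : Continuous G)
    (hnc : ∃ a b : ℝ, G a ≠ G b) :
    ((sigmaPiSubalgebra r G).comap (ContinuousMap.coeFnAlgHom ℝ)).SeparatesPoints := by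
  intro x y hxy
  obtain ⟨a, b, hab⟩ := hnc
  obtain ⟨w, c, hx, hy⟩ := exists_affine_eq_of_ne hxy a b
  let φ : C(Fin r → ℝ, ℝ) := ⟨fun z => G (∑ i, w i * z i + c), by fun_prop⟩
  exact ⟨φ, ⟨φ, SigmaPi.comp_affine_mem w c, rfl⟩, by simpa [φ, hx, hy] using hab⟩

/-- Universal approximation (Hornik–Stinchcombe–White / Stone–Weierstrass): if
`G` is continuous and non-constant, then `Σ∏ʳ(G)` is uniformly dense in
`C(K, ℝ)` for every compact `K ⊆ ℝʳ`. -/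
theorem stmt16 (r : ℕ) (G : ℝ → ℝ) (hG : Continuous G) (hnc : ∃ a b : ℝ, G a ≠ G b)
    (K : Set (Fin r → ℝ)) (hK : IsCompact K)
    (f : (Fin r → ℝ) → ℝ) (hf : ContinuousOn f K) (ε : ℝ) (hε : 0 < ε) :
    ∃ h ∈ SigmaPi r G, ∀ x ∈ K, |f x - h x| < ε := by
  obtain ⟨F, hF⟩ := ContinuousMap.exists_restrict_eq hK.isClosed ⟨K.domRestrict f, hf.domRestrict⟩
  obtain ⟨h, hh, hhF⟩ :=
    ContinuousMap.exists_mem_subalgebra_near_continuous_of_isCompact_of_separatesPoints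
      (separatesPoints_comap_sigmaPiSubalgebra hG hnc) F hK hε
  refine ⟨h, hh, fun x hx => ?_⟩
  have hFx : F x = f x := DFunLike.congr_fun hF ⟨x, hx⟩
  rw [abs_sub_comm, ← hFx, ← Real.norm_eq_abs]
  exact hhF x hx
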